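/- arXiv:2106.00519 — 2 statements merged into one kernel-verified Lean document; each statement's English description precedes it below -/
import Mathlib

section
/- Assume F : ℝ^n ⇒ ℝ^n is SCD regular around (x̄, ȳ) ∈ gph F. Then there is a neighborhood W of (x̄, ȳ) such that F is SCD regular around every (x, y) ∈ gph F ∩ W, and limsup_{(x,y)→(x̄,ȳ), (x,y)∈gph F} scd reg F(x, y) ≤ scd reg F(x̄, ȳ). -/
open Filter Topology Metric Set
open scoped InnerProductSpace RealInnerProductSpace ENNReal NNReal

noncomputable section

namespace SCD

abbrev E (n : ℕ) := EuclideanSpace ℝ (Fin n)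
abbrev E2 (n : ℕ) := WithLp 2 (E n × E n)

variable {n : ℕ}

def lp2 (n : ℕ) : E2 n ≃ₗ[ℝ] E n × E n := WithLp.linearEquiv 2 ℝ (E n × E n)
def mk2 (u v : E n) : E2 n := (lp2 n).symm (u, v)
def fst2 (z : E2 n) : E n := (lp2 n z).1
def snd2 (z : E2 n) : E n := (lp2 n z).2

instance : FiniteDimensional ℝ (E2 n) := Module.Finite.equiv (lp2 n).symm

def tcone {H : Type*} [NormedAddCommGroup H] [NormedSpace ℝ H] (A : Set H) (z : H) : Set H :=
  {w | ∃ t : ℕ → ℝ, ∃ wk : ℕ → H, (∀ k, 0 < t k) ∧ Tendsto t atTop (𝓝 0) ∧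
      Tendsto wk atTop (𝓝 w) ∧ ∀ k, z + t k • wk k ∈ A}

def gph (F : E n → Set (E n)) : Set (E2 n) := {z | snd2 z ∈ F (fst2 z)}
def projC (L : Submodule ℝ (E2 n)) : E2 n →L[ℝ] E2 n := L.subtypeL.comp (L.orthogonalProjectionOnto)
def dZ (L₁ L₂ : Submodule ℝ (E2 n)) : ℝ := ‖projC L₁ - projC L₂‖

def Sneg (n : ℕ) : E2 n ≃ₗ[ℝ] E2 n :=
  (lp2 n).trans (((LinearEquiv.prodComm ℝ (E n) (E n)).trans
    ((LinearEquiv.neg ℝ).prodCongr (LinearEquiv.refl ℝ (E n)))).trans (lp2 n).symm)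

def adjS (L : Submodule ℝ (E2 n)) : Submodule ℝ (E2 n) := Lᗮ.map (Sneg n).toLinearMap

/-- `O_F`: the set of points of `gph F` where `F` is graphically smooth of dimension `n`,
i.e. the tangent cone to the graph is an `n`-dimensional linear subspace. -/
def OF (F : E n → Set (E n)) : Set (E2 n) :=
  {z | z ∈ gph F ∧ ∃ L : Submodule ℝ (E2 n),
    Module.finrank ℝ L = n ∧ (L : Set (E2 n)) = tcone (gph F) z}

/-- The primal generalized derivative `Sp F(x,y)`. -/
def Sp (F : E n → Set (E n)) (z : E2 n) : Set (Submodule ℝ (E2 n)) :=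
  {L | Module.finrank ℝ L = n ∧ ∃ (zk : ℕ → E2 n) (Lk : ℕ → Submodule ℝ (E2 n)),
      (∀ k, zk k ∈ gph F ∧ Module.finrank ℝ (Lk k) = n ∧
        ((Lk k : Set (E2 n)) = tcone (gph F) (zk k))) ∧
      Tendsto zk atTop (𝓝 z) ∧ Tendsto (fun k => dZ (Lk k) L) atTop (𝓝 0)}

/-- The dual generalized derivative `Sp* F(x,y)`. -/
def SpStar (F : E n → Set (E n)) (z : E2 n) : Set (Submodule ℝ (E2 n)) :=
  {L' | ∃ L ∈ Sp F z, L' = adjS L}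

/-- `F` has the SCD property at `z ∈ gph F`. -/
def SCDAt (F : E n → Set (E n)) (z : E2 n) : Prop := (Sp F z).Nonempty

/-- `F` has the SCD property around `z ∈ gph F`. -/
def SCDAround (F : E n → Set (E n)) (z : E2 n) : Prop :=
  ∃ δ > (0 : ℝ), ∀ z' ∈ gph F, dist z' z < δ → SCDAt F z'

/-- `Z_n^{reg}`: the subspaces `L ∈ Z_n` such that `(y*, 0) ∈ L` implies `y* = 0`. -/
def Znreg (n : ℕ) : Set (Submodule ℝ (E2 n)) :=
  {L | Module.finrank ℝ L = n ∧ ∀ y : E n, mk2 y 0 ∈ L → y = 0}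

/-- `F` is SCD regular around `z ∈ gph F`. -/
def SCDRegularAround (F : E n → Set (E n)) (z : E2 n) : Prop :=
  SCDAround F z ∧ ∀ L ∈ SpStar F z, L ∈ Znreg n

/-- The set of values `‖y*‖` for `(y*, x*)` in some `L ∈ Sp* F(x,y)` with `‖x*‖ ≤ 1`;
its supremum is the modulus of SCD regularity. -/
def scdregSet (F : E n → Set (E n)) (z : E2 n) : Set ℝ :=
  {r | ∃ L ∈ SpStar F z, ∃ w : E2 n, w ∈ L ∧ ‖snd2 w‖ ≤ 1 ∧ r = ‖fst2 w‖}

/-- The modulus of SCD regularity `scd reg F(x,y)`. -/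
def scdreg (F : E n → Set (E n)) (z : E2 n) : ℝ := sSup (scdregSet F z)

/-- The graph of the outer limiting graphical derivative `D^♯F(x̄,ȳ)`. -/
def DsharpG (F : E n → Set (E n)) (z : E2 n) : Set (E2 n) :=
  {w | ∃ (zk : ℕ → E2 n) (wk : ℕ → E2 n),
    (∀ k, zk k ∈ gph F ∧ wk k ∈ tcone (gph F) (zk k)) ∧
    Tendsto zk atTop (𝓝 z) ∧ Tendsto wk atTop (𝓝 w)}

/-- The regular (Fréchet) normal cone: the polar of the tangent cone. -/
def regN (A : Set (E2 n)) (z : E2 n) : Set (E2 n) := {w | ∀ v ∈ tcone A z, ⟪w, v⟫_ℝ ≤ 0}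

/-- The limiting (Mordukhovich) normal cone. -/
def limN (A : Set (E2 n)) (z : E2 n) : Set (E2 n) :=
  {w | ∃ (zk wk : ℕ → E2 n), (∀ k, zk k ∈ A ∧ wk k ∈ regN A (zk k)) ∧
    Tendsto zk atTop (𝓝 z) ∧ Tendsto wk atTop (𝓝 w)}

/-- The graph of the limiting coderivative: `(y*, x*)` with `(x*, -y*)` in the limiting
normal cone to the graph. -/
def coderivG (F : E n → Set (E n)) (z : E2 n) : Set (E2 n) :=
  {w | mk2 (snd2 w) (-(fst2 w)) ∈ limN (gph F) z}

/-- The graph of the strict (paratingent) derivative `D_*F(x̄,ȳ)`. -/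
def paraconeG (F : E n → Set (E n)) (z : E2 n) : Set (E2 n) :=
  {w | ∃ (t : ℕ → ℝ) (z1 z2 : ℕ → E2 n), (∀ k, 0 < t k) ∧ Tendsto t atTop (𝓝 0) ∧
    (∀ k, z1 k ∈ gph F ∧ z2 k ∈ gph F) ∧ Tendsto z1 atTop (𝓝 z) ∧ Tendsto z2 atTop (𝓝 z) ∧
    Tendsto (fun k => (t k)⁻¹ • (z2 k - z1 k)) atTop (𝓝 w)}

/-- The B-subdifferential of `f : U → ℝ^n` at `x`. -/
def Bsub (f : E n → E n) (U : Set (E n)) (x : E n) : Set (E n →L[ℝ] E n) :=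
  {A | ∃ xk : ℕ → E n, (∀ k, xk k ∈ U ∧ DifferentiableAt ℝ f (xk k)) ∧
    Tendsto xk atTop (𝓝 x) ∧ Tendsto (fun k => fderiv ℝ f (xk k)) atTop (𝓝 A)}

/-- A single-valued map `f` on `U` viewed as a set-valued map. -/
def sv (f : E n → E n) (U : Set (E n)) : E n → Set (E n) := fun x => {y | x ∈ U ∧ y = f x}

/-- The linear map `u ↦ (u, A u)`. -/
def graphMap (A : E n →L[ℝ] E n) : E n →ₗ[ℝ] E2 n :=
  (lp2 n).symm.toLinearMap.comp (LinearMap.prod LinearMap.id A.toLinearMap)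

/-- The subspace `rge(I, A) = {(u, Au) : u ∈ ℝ^n}`. -/
def rgeIA (A : E n →L[ℝ] E n) : Submodule ℝ (E2 n) := LinearMap.range (graphMap A)

/-- The linear map `p ↦ (C p, p)`. -/
def graphMapRev (C : E n →L[ℝ] E n) : E n →ₗ[ℝ] E2 n :=
  (lp2 n).symm.toLinearMap.comp (LinearMap.prod C.toLinearMap LinearMap.id)

/-- The subspace `rge(C, I) = {(C p, p) : p ∈ ℝ^n}`. -/
def rgeCI (C : E n →L[ℝ] E n) : Submodule ℝ (E2 n) := LinearMap.range (graphMapRev C)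

/-- The preimage map `F^{-1}(y)`. -/
def Finv (F : E n → Set (E n)) (y : E n) : Set (E n) := {x | y ∈ F x}

/-- Metric subregularity at `z ∈ gph F` with constant `κ`. -/
def SubregWith (F : E n → Set (E n)) (z : E2 n) (κ : ℝ) : Prop :=
  ∃ δ > (0 : ℝ), ∀ x' : E n, dist x' (fst2 z) < δ →
    EMetric.infEdist x' (Finv F (snd2 z)) ≤ ENNReal.ofReal κ * EMetric.infEdist (snd2 z) (F x')

/-- `F` is metrically subregular at `z ∈ gph F`. -/
def SubregAt (F : E n → Set (E n)) (z : E2 n) : Prop := ∃ κ, 0 ≤ κ ∧ SubregWith F z κ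

/-- The modulus of metric subregularity `subreg F(x,y)`. -/
def subregMod (F : E n → Set (E n)) (z : E2 n) : ℝ := sInf {κ | 0 ≤ κ ∧ SubregWith F z κ}

/-- `F` is strongly metrically subregular at `z ∈ gph F`. -/
def StrSubregAt (F : E n → Set (E n)) (z : E2 n) : Prop :=
  SubregAt F z ∧ ∃ δ > (0 : ℝ), ∀ x' ∈ Finv F (snd2 z), dist x' (fst2 z) < δ → x' = fst2 z

/-- `F` is strongly metrically subregular around `zb ∈ gph F` (with finite `lsubreg`). -/
def StrSubregAround (F : E n → Set (E n)) (zb : E2 n) : Prop :=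
  ∃ δ > (0 : ℝ), (∀ z ∈ gph F, dist z zb < δ → StrSubregAt F z) ∧
    ∃ c : ℝ, ∀ z ∈ gph F, dist z zb < δ → subregMod F z ≤ c

/-- `lsubreg F(x̄,ȳ)`: the limsup of `subreg F(x,y)` over graph points `(x,y) → (x̄,ȳ)`. -/
def lsubreg (F : E n → Set (E n)) (zb : E2 n) : ℝ :=
  Filter.limsup (fun z => subregMod F z) (𝓝[gph F] zb)

/-- Metric regularity around `zb ∈ gph F` with constant `κ`. -/
def RegWith (F : E n → Set (E n)) (zb : E2 n) (κ : ℝ) : Prop :=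
  ∃ δ > (0 : ℝ), ∀ x y : E n, dist x (fst2 zb) < δ → dist y (snd2 zb) < δ →
    EMetric.infEdist x (Finv F y) ≤ ENNReal.ofReal κ * EMetric.infEdist y (F x)

/-- `F` is metrically regular around `zb ∈ gph F`. -/
def MetrRegAround (F : E n → Set (E n)) (zb : E2 n) : Prop := ∃ κ, 0 ≤ κ ∧ RegWith F zb κ

/-- The modulus of metric regularity `reg F(x̄,ȳ)`. -/
def regMod (F : E n → Set (E n)) (zb : E2 n) : ℝ := sInf {κ | 0 ≤ κ ∧ RegWith F zb κ}

/-- `F` is strongly metrically regular around `zb ∈ gph F`: metrically regular and `F⁻¹`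
has a single-valued localization around `(ȳ, x̄)`. -/
def StrRegAround (F : E n → Set (E n)) (zb : E2 n) : Prop :=
  MetrRegAround F zb ∧
  ∃ (X' Y' : Set (E n)) (h : E n → E n), IsOpen X' ∧ IsOpen Y' ∧
    fst2 zb ∈ X' ∧ snd2 zb ∈ Y' ∧ h (snd2 zb) = fst2 zb ∧
    gph F ∩ {w | fst2 w ∈ X' ∧ snd2 w ∈ Y'} = {w | snd2 w ∈ Y' ∧ fst2 w = h (snd2 w)}

/-- `F` is SCD semismooth* at `zb ∈ gph F`. -/
def SCDSemismoothAt (F : E n → Set (E n)) (zb : E2 n) : Prop :=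
  SCDAround F zb ∧ ∀ ε > (0 : ℝ), ∃ δ > (0 : ℝ), ∀ z ∈ gph F, dist z zb ≤ δ →
    ∀ L ∈ SpStar F z, ∀ w : E2 n, w ∈ L →
      |⟪snd2 w, fst2 z - fst2 zb⟫_ℝ - ⟪fst2 w, snd2 z - snd2 zb⟫_ℝ| ≤ ε * ‖z - zb‖ * ‖w‖

/-- `F` is graphically Lipschitzian of dimension `n` at `zb` with transformation mapping `Φ`,
local inverse `Ψ`, neighborhood `W`, and `K`-Lipschitz map `f : U → ℝ^n`. -/
def GraphLipWith (F : E n → Set (E n)) (zb : E2 n) (Φ Ψ : E2 n → E2 n)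
    (W : Set (E2 n)) (U : Set (E n)) (f : E n → E n) (K : ℝ≥0) : Prop :=
  IsOpen W ∧ zb ∈ W ∧ ContDiffOn ℝ 1 Φ W ∧ Set.InjOn Φ W ∧ IsOpen (Φ '' W) ∧
  ContDiffOn ℝ 1 Ψ (Φ '' W) ∧ Set.LeftInvOn Ψ Φ W ∧
  IsOpen U ∧ LipschitzOnWith K f U ∧
  Φ '' (gph F ∩ W) = {w | fst2 w ∈ U ∧ snd2 w = f (fst2 w)}

/-- `F` is graphically Lipschitzian of dimension `n` at `zb` with transformation mapping `Φ`. -/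
def GraphLipAt (F : E n → Set (E n)) (zb : E2 n) (Φ : E2 n → E2 n) : Prop :=
  ∃ Ψ W U f K, GraphLipWith F zb Φ Ψ W U f K

/-- `∇̄^Φ F(x̄,ȳ)`: the `(2n)×n` matrices `Z` (as linear maps `ℝ^n → ℝ^{2n}`) with
`rge Z ∈ Sp F(x̄,ȳ)` and upper block of `∇Φ(x̄,ȳ)Z` equal to the identity. -/
def BsubPhi (F : E n → Set (E n)) (zb : E2 n) (Φ : E2 n → E2 n) : Set (E n →L[ℝ] E2 n) :=
  {Z | LinearMap.range (Z : E n →ₗ[ℝ] E2 n) ∈ Sp F zb ∧ ∀ p, fst2 (fderiv ℝ Φ zb (Z p)) = p}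

/-- A (globally) monotone set-valued map. -/
def MonoMap (T : E n → Set (E n)) : Prop :=
  ∀ x₁ y₁ x₂ y₂, y₁ ∈ T x₁ → y₂ ∈ T x₂ → 0 ≤ ⟪y₁ - y₂, x₁ - x₂⟫_ℝ

/-- `F` is locally maximally monotone at `z ∈ gph F`. -/
def LocMaxMonoAt (F : E n → Set (E n)) (z : E2 n) : Prop :=
  ∃ X Y : Set (E n), IsOpen X ∧ IsOpen Y ∧ fst2 z ∈ X ∧ snd2 z ∈ Y ∧
    (∀ w₁ ∈ gph F ∩ {w | fst2 w ∈ X ∧ snd2 w ∈ Y},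
     ∀ w₂ ∈ gph F ∩ {w | fst2 w ∈ X ∧ snd2 w ∈ Y},
       0 ≤ ⟪snd2 w₁ - snd2 w₂, fst2 w₁ - fst2 w₂⟫_ℝ) ∧
    ∀ T : E n → Set (E n), MonoMap T →
      gph F ∩ {w | fst2 w ∈ X ∧ snd2 w ∈ Y} ⊆ gph T →
      gph F ∩ {w | fst2 w ∈ X ∧ snd2 w ∈ Y} = gph T ∩ {w | fst2 w ∈ X ∧ snd2 w ∈ Y}

/-- `F` is locally maximally hypomonotone at `z ∈ gph F`:
`γI + F` is locally maximally monotone at `(x, γx + y)` for some `γ ≥ 0`. -/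
def LocMaxHypoAt (F : E n → Set (E n)) (z : E2 n) : Prop :=
  ∃ γ : ℝ, 0 ≤ γ ∧ LocMaxMonoAt (fun x => (fun y => γ • x + y) '' F x)
    (mk2 (fst2 z) (γ • fst2 z + snd2 z))

/-- A firmly nonexpansive matrix: `⟨Bv, v⟩ ≥ ‖Bv‖²` for all `v`. -/
def FirmNonexp (B : E n →L[ℝ] E n) : Prop := ∀ v, ‖B v‖ ^ 2 ≤ ⟪B v, v⟫_ℝ

/-! The orthogonal projections onto `n`-dimensional subspaces form a compact set: a limit of
star projections is a star projection, and `‖P_K - P_M‖ < 1` forces `dim K = dim M`. Together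
with the closedness of `Sp F` under joint limits of base point and subspace, every limit of
`w_k ∈ Sp* F(z_k)` with `z_k → z̄` lies in some `L ∈ Sp* F(z̄)`. If unit vectors
`(y*_k, x*_k) ∈ Sp* F(z_k)` had `‖x*_k‖ = o(‖y*_k‖)`, such a limit would be `(y*, 0)` with
`y* ≠ 0`, contradicting regularity at `z̄`; hence `‖y*‖ ≤ C ‖x*‖` uniformly near `z̄`, which is
SCD regularity at the nearby points. Under this bound the competitors in `scd reg` are bounded,
and the same limit argument carries values above `κ > scd reg F(z̄)` over to `z̄`. -/

open Module

section StarProjection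

lemma isClosed_setOf_isStarProjection {R : Type*} [Mul R] [Star R] [TopologicalSpace R]
    [ContinuousMul R] [ContinuousStar R] [T2Space R] :
    IsClosed {p : R | IsStarProjection p} := by
  have h : {p : R | IsStarProjection p} = {p | p * p = p} ∩ {p | star p = p} :=
    Set.ext fun p => ⟨fun hp => ⟨hp.isIdempotentElem, hp.isSelfAdjoint⟩, fun hp => ⟨hp.1, hp.2⟩⟩
  rw [h]
  exact (isClosed_eq (continuous_id.mul continuous_id) continuous_id).inter
    (isClosed_eq continuous_star continuous_id)

variable {E : Type*} [NormedAddCommGroup E] [InnerProductSpace ℝ E]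

lemma finrank_le_of_norm_starProjection_sub_lt_one (K M : Submodule ℝ E)
    [K.HasOrthogonalProjection] [M.HasOrthogonalProjection] [FiniteDimensional ℝ M]
    (h : ‖K.starProjection - M.starProjection‖ < 1) : finrank ℝ K ≤ finrank ℝ M := by
  refine LinearMap.finrank_le_finrank_of_injective
    (f := M.orthogonalProjectionOnto.toLinearMap ∘ₗ K.subtype) ?_
  rw [← LinearMap.ker_eq_bot, LinearMap.ker_eq_bot']
  intro x hx
  have hMx : M.starProjection x = 0 := by
    change ((M.orthogonalProjectionOnto (x : E) : M) : E) = 0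
    rw [show M.orthogonalProjectionOnto (x : E) = 0 from hx, ZeroMemClass.coe_zero]
  have hx_eq : (K.starProjection - M.starProjection) x = x := by
    simp [hMx, Submodule.starProjection_eq_self_iff.mpr x.2]
  have hle := (K.starProjection - M.starProjection).le_opNorm x
  rw [hx_eq] at hle
  have hx0 : ‖(x : E)‖ = 0 := by nlinarith [norm_nonneg (x : E)]
  exact Subtype.ext (norm_eq_zero.mp hx0)

lemma exists_subseq_tendsto_starProjection [FiniteDimensional ℝ E] {d : ℕ}
    (L : ℕ → Submodule ℝ E) (hL : ∀ j, finrank ℝ (L j) = d) :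
    ∃ (K : Submodule ℝ E) (φ : ℕ → ℕ), StrictMono φ ∧ finrank ℝ K = d ∧
      Tendsto (fun j => (L (φ j)).starProjection) atTop (𝓝 K.starProjection) := by
  have hmem : ∀ j, (L j).starProjection ∈
      closedBall (0 : E →L[ℝ] E) 1 ∩ {p | IsStarProjection p} := fun j =>
    ⟨by simpa using (L j).starProjection_norm_le, isStarProjection_starProjection⟩
  obtain ⟨Q, hQ, φ, hφ, hlim⟩ :=
    ((isCompact_closedBall _ _).inter_right isClosed_setOf_isStarProjection).tendsto_subseq hmem
  obtain ⟨K, _, rfl⟩ := isStarProjection_iff_eq_starProjection.mp hQ.2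
  refine ⟨K, φ, hφ, ?_, hlim⟩
  obtain ⟨j, hj⟩ :=
    ((tendsto_iff_norm_sub_tendsto_zero.mp hlim).eventually (gt_mem_nhds one_pos)).exists
  rw [← hL (φ j)]
  exact le_antisymm (finrank_le_of_norm_starProjection_sub_lt_one _ _ (by rwa [norm_sub_rev]))
    (finrank_le_of_norm_starProjection_sub_lt_one _ _ hj)

lemma mem_orthogonal_of_tendsto {L : ℕ → Submodule ℝ E} {K : Submodule ℝ E}
    [∀ j, (L j).HasOrthogonalProjection] [K.HasOrthogonalProjection]
    (hL : Tendsto (fun j => (L j).starProjection) atTop (𝓝 K.starProjection))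
    {u : ℕ → E} {u₀ : E} (hu : ∀ j, u j ∈ (L j)ᗮ) (hu₀ : Tendsto u atTop (𝓝 u₀)) :
    u₀ ∈ Kᗮ := by
  have hlim := ((continuous_fst.clm_apply continuous_snd).tendsto _).comp (hL.prodMk_nhds hu₀)
  rw [← K.starProjection_apply_eq_zero_iff]
  refine tendsto_nhds_unique hlim ?_
  simp [Function.comp_def, (Submodule.starProjection_apply_eq_zero_iff _).mpr (hu _)]

end StarProjection

section Coordinates

variable {n : ℕ}

lemma continuous_fst2 : Continuous (fst2 (n := n)) := WithLp.continuous_fst ..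

lemma continuous_snd2 : Continuous (snd2 (n := n)) := WithLp.continuous_snd ..

lemma fst2_smul (c : ℝ) (z : E2 n) : fst2 (c • z) = c • fst2 z := by simp [fst2]

lemma snd2_smul (c : ℝ) (z : E2 n) : snd2 (c • z) = c • snd2 z := by simp [snd2]

lemma fst2_mk2 (u v : E n) : fst2 (mk2 u v) = u := by simp [mk2, fst2]

lemma snd2_mk2 (u v : E n) : snd2 (mk2 u v) = v := by simp [mk2, snd2]

lemma mk2_fst2_snd2 (z : E2 n) : mk2 (fst2 z) (snd2 z) = z := by simp [mk2, fst2, snd2]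

lemma norm_sq_eq_norm_fst2_sq_add_norm_snd2_sq (z : E2 n) :
    ‖z‖ ^ 2 = ‖fst2 z‖ ^ 2 + ‖snd2 z‖ ^ 2 :=
  WithLp.prod_norm_sq_eq_of_L2 z

lemma norm_fst2_le (z : E2 n) : ‖fst2 z‖ ≤ ‖z‖ := by
  nlinarith [norm_sq_eq_norm_fst2_sq_add_norm_snd2_sq z, norm_nonneg (fst2 z), norm_nonneg z]

lemma norm_le_norm_fst2_add_norm_snd2 (z : E2 n) : ‖z‖ ≤ ‖fst2 z‖ + ‖snd2 z‖ := by
  nlinarith [norm_sq_eq_norm_fst2_sq_add_norm_snd2_sq z, norm_nonneg (fst2 z),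
    norm_nonneg (snd2 z), norm_nonneg z]

lemma finrank_E2 : finrank ℝ (E2 n) = n + n := by
  simp [(lp2 n).finrank_eq, finrank_prod]

lemma eq_zero_of_mem_Znreg {L : Submodule ℝ (E2 n)} (hL : L ∈ Znreg n) {w : E2 n} (hw : w ∈ L)
    (hsnd : snd2 w = 0) : w = 0 := by
  have hfst : fst2 w = 0 := hL.2 _ (by rwa [← hsnd, mk2_fst2_snd2])
  rw [← mk2_fst2_snd2 w, hfst, hsnd]
  simp [mk2]

end Coordinates

section Adjoint

variable {n : ℕ}

lemma mem_adjS_iff {L : Submodule ℝ (E2 n)} {w : E2 n} :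
    w ∈ adjS L ↔ (Sneg n).symm w ∈ Lᗮ :=
  Submodule.mem_map_equiv (e := Sneg n) _

lemma Sneg_symm_apply (w : E2 n) : (Sneg n).symm w = mk2 (snd2 w) (-fst2 w) := by
  simp [Sneg, mk2, fst2, snd2, lp2]

lemma continuous_Sneg_symm : Continuous (Sneg n).symm := by
  simp only [funext Sneg_symm_apply, mk2, fst2, snd2, lp2, WithLp.linearEquiv_apply,
    WithLp.linearEquiv_symm_apply]
  fun_prop

lemma finrank_adjS {L : Submodule ℝ (E2 n)} (hL : finrank ℝ L = n) : finrank ℝ (adjS L) = n := by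
  have hsum := L.finrank_add_finrank_orthogonal
  rw [hL, finrank_E2] at hsum
  rw [adjS, LinearEquiv.finrank_map_eq]
  omega

lemma tendsto_projC_of_tendsto_dZ {L : ℕ → Submodule ℝ (E2 n)} {M : Submodule ℝ (E2 n)}
    (hd : Tendsto (fun j => dZ (L j) M) atTop (𝓝 0)) :
    Tendsto (fun j => projC (L j)) atTop (𝓝 (projC M)) :=
  tendsto_iff_norm_sub_tendsto_zero.mpr hd

lemma mem_adjS_of_tendsto {L : ℕ → Submodule ℝ (E2 n)} {M : Submodule ℝ (E2 n)}
    (hd : Tendsto (fun j => dZ (L j) M) atTop (𝓝 0)) {w : ℕ → E2 n} {w₀ : E2 n}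
    (hw : ∀ j, w j ∈ adjS (L j)) (hw₀ : Tendsto w atTop (𝓝 w₀)) : w₀ ∈ adjS M :=
  mem_adjS_iff.mpr <| mem_orthogonal_of_tendsto (tendsto_projC_of_tendsto_dZ hd)
    (fun j => mem_adjS_iff.mp (hw j))
    ((continuous_Sneg_symm.tendsto w₀).comp hw₀)

lemma mem_Znreg_adjS {L : Submodule ℝ (E2 n)} (hL : finrank ℝ L = n) {C : ℝ}
    (hC : ∀ w ∈ adjS L, ‖fst2 w‖ ≤ C * ‖snd2 w‖) : adjS L ∈ Znreg n :=
  ⟨finrank_adjS hL, fun y hy => norm_le_zero_iff.mp (by simpa [fst2_mk2, snd2_mk2] using hC _ hy)⟩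

lemma norm_fst2_le_of_forall_norm_eq_one {L : Submodule ℝ (E2 n)} {C : ℝ}
    (h : ∀ w ∈ L, ‖w‖ = 1 → ‖fst2 w‖ ≤ C * ‖snd2 w‖) {w : E2 n} (hw : w ∈ L) :
    ‖fst2 w‖ ≤ C * ‖snd2 w‖ := by
  rcases eq_or_ne w 0 with rfl | hw0
  · simp [fst2, snd2]
  have hpos : 0 < ‖w‖ := norm_pos_iff.mpr hw0
  have hunit := h _ (L.smul_mem ‖w‖⁻¹ hw) (norm_smul_inv_norm hw0)
  rw [fst2_smul, snd2_smul, norm_smul, norm_smul, norm_inv, norm_norm, mul_left_comm] at hunit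
  exact le_of_mul_le_mul_left hunit (inv_pos.mpr hpos)

end Adjoint

section GeneralizedDerivative

variable {n : ℕ} {F : E n → Set (E n)}

lemma mem_Sp_iff {z : E2 n} {L : Submodule ℝ (E2 n)} :
    L ∈ Sp F z ↔ finrank ℝ L = n ∧ ∀ ε > 0, ∃ (z' : E2 n) (T : Submodule ℝ (E2 n)),
      (z' ∈ gph F ∧ finrank ℝ T = n ∧ (T : Set (E2 n)) = tcone (gph F) z') ∧
      dist z' z < ε ∧ dZ T L < ε := by
  refine and_congr_right fun _ => ⟨?_, fun h => ?_⟩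
  · rintro ⟨zk, Lk, hk, hz, hd⟩ ε hε
    obtain ⟨k, hzk, hdk⟩ :=
      ((Metric.tendsto_nhds.mp hz ε hε).and (hd.eventually (gt_mem_nhds hε))).exists
    exact ⟨zk k, Lk k, hk k, hzk, hdk⟩
  · choose zk Lk hk hz hd using fun k : ℕ => h (1 / (k + 1)) Nat.one_div_pos_of_nat
    refine ⟨zk, Lk, hk, ?_, ?_⟩
    · exact tendsto_iff_dist_tendsto_zero.mpr <| squeeze_zero (fun _ => dist_nonneg)
        (fun k => (hz k).le) tendsto_one_div_add_atTop_nhds_zero_nat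
    · exact squeeze_zero (fun _ => norm_nonneg _) (fun k => (hd k).le)
        tendsto_one_div_add_atTop_nhds_zero_nat

lemma mem_Sp_of_tendsto {z : ℕ → E2 n} {z₀ : E2 n} (hz : Tendsto z atTop (𝓝 z₀))
    {L : ℕ → Submodule ℝ (E2 n)} (hL : ∀ j, L j ∈ Sp F (z j)) {M : Submodule ℝ (E2 n)}
    (hM : finrank ℝ M = n) (hd : Tendsto (fun j => dZ (L j) M) atTop (𝓝 0)) :
    M ∈ Sp F z₀ := by
  refine mem_Sp_iff.mpr ⟨hM, fun ε hε => ?_⟩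
  obtain ⟨j, hzj, hdj⟩ := ((Metric.tendsto_nhds.mp hz (ε / 2) (half_pos hε)).and
    (hd.eventually (gt_mem_nhds (half_pos hε)))).exists
  obtain ⟨z', T, hT, hz', hdT⟩ := (mem_Sp_iff.mp (hL j)).2 (ε / 2) (half_pos hε)
  refine ⟨z', T, hT, ?_, ?_⟩
  · linarith [dist_triangle z' (z j) z₀]
  · unfold dZ at hdj hdT ⊢
    linarith [norm_sub_le_norm_sub_add_norm_sub (projC T) (projC (L j)) (projC M)]

lemma exists_subseq_tendsto_dZ (L : ℕ → Submodule ℝ (E2 n)) (hL : ∀ j, finrank ℝ (L j) = n) :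
    ∃ (M : Submodule ℝ (E2 n)) (φ : ℕ → ℕ), StrictMono φ ∧ finrank ℝ M = n ∧
      Tendsto (fun j => dZ (L (φ j)) M) atTop (𝓝 0) := by
  obtain ⟨M, φ, hφ, hM, hlim⟩ := exists_subseq_tendsto_starProjection L hL
  exact ⟨M, φ, hφ, hM, tendsto_iff_norm_sub_tendsto_zero.mp hlim⟩

lemma exists_mem_Sp_mem_adjS_of_tendsto {z : ℕ → E2 n} {z₀ : E2 n}
    (hz : Tendsto z atTop (𝓝 z₀)) {L : ℕ → Submodule ℝ (E2 n)} (hL : ∀ j, L j ∈ Sp F (z j))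
    {w : ℕ → E2 n} {w₀ : E2 n} (hw : ∀ j, w j ∈ adjS (L j)) (hw₀ : Tendsto w atTop (𝓝 w₀)) :
    ∃ M ∈ Sp F z₀, w₀ ∈ adjS M := by
  obtain ⟨M, φ, hφ, hM, hd⟩ := exists_subseq_tendsto_dZ L fun j => (hL j).1
  exact ⟨M, mem_Sp_of_tendsto (hz.comp hφ.tendsto_atTop) (fun j => hL (φ j)) hM hd,
    mem_adjS_of_tendsto hd (fun j => hw (φ j)) (hw₀.comp hφ.tendsto_atTop)⟩

end GeneralizedDerivative

section Regularity

variable {n : ℕ} {F : E n → Set (E n)}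

lemma scdAround_iff_eventually {z : E2 n} :
    SCDAround F z ↔ ∀ᶠ z' in 𝓝 z, z' ∈ gph F → SCDAt F z' := by
  rw [Metric.eventually_nhds_iff]
  exact exists_congr fun _ => and_congr_right fun _ => forall_congr' fun _ => imp.swap

lemma SCDAround.eventually_scdAround {z : E2 n} (h : SCDAround F z) :
    ∀ᶠ z' in 𝓝 z, SCDAround F z' :=
  (scdAround_iff_eventually.mp h).eventually_nhds.mono fun _ => scdAround_iff_eventually.mpr

lemma forall_mem_scdregSet_le {z : E2 n} {C : ℝ} (hC0 : 0 ≤ C)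
    (hC : ∀ L ∈ Sp F z, ∀ w ∈ adjS L, ‖fst2 w‖ ≤ C * ‖snd2 w‖) :
    ∀ r ∈ scdregSet F z, r ≤ C := by
  rintro _ ⟨_, ⟨L, hL, rfl⟩, w, hw, hsnd, rfl⟩
  exact (hC L hL w hw).trans (mul_le_of_le_one_right hC0 hsnd)

variable {zb : E2 n}

lemma exists_eventually_norm_fst2_le_mul_norm_snd2 (hZ : ∀ L ∈ SpStar F zb, L ∈ Znreg n) :
    ∃ C, 0 ≤ C ∧ ∀ᶠ z in 𝓝 zb, ∀ L ∈ Sp F z, ∀ w ∈ adjS L, ‖fst2 w‖ ≤ C * ‖snd2 w‖ := by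
  -- Working in `𝓝 zb ×ˢ atTop` lets a single sequence send `z → zb` and `C → ∞` together.
  suffices h : ∀ᶠ p : E2 n × ℝ in 𝓝 zb ×ˢ atTop,
      ∀ L ∈ Sp F p.1, ∀ w ∈ adjS L, ‖w‖ = 1 → ‖fst2 w‖ ≤ p.2 * ‖snd2 w‖ by
    obtain ⟨P, hP, Q, hQ, hPQ⟩ := eventually_prod_iff.mp h
    obtain ⟨C, hC, hC0⟩ := (hQ.and (eventually_ge_atTop 0)).exists
    exact ⟨C, hC0, hP.mono fun z hz L hL _ =>
      norm_fst2_le_of_forall_norm_eq_one (hPQ hz hC L hL)⟩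
  by_contra h
  obtain ⟨p, hp, hbad⟩ := frequently_iff_seq_forall.mp (not_eventually.mp h)
  push Not at hbad
  choose L hL w hw hw1 hlt using hbad
  obtain ⟨w₀, -, φ, hφ, hw₀⟩ :=
    tendsto_subseq_of_bounded (s := sphere 0 1) isBounded_sphere (x := w)
      fun j => mem_sphere_zero_iff_norm.mpr (hw1 j)
  have hp1 : Tendsto (fun j => (p (φ j)).1) atTop (𝓝 zb) :=
    (tendsto_fst.comp hp).comp hφ.tendsto_atTop
  have hp2 : Tendsto (fun j => (p (φ j)).2) atTop atTop :=
    (tendsto_snd.comp hp).comp hφ.tendsto_atTop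
  obtain ⟨M, hM, hw₀M⟩ :=
    exists_mem_Sp_mem_adjS_of_tendsto hp1 (fun j => hL (φ j)) (fun j => hw (φ j)) hw₀
  have hsnd_le : ∀ᶠ j in atTop, ‖snd2 (w (φ j))‖ ≤ ((p (φ j)).2)⁻¹ :=
    (hp2.eventually_gt_atTop 0).mono fun j hj => by
      rw [← one_div, le_div_iff₀ hj, mul_comm]
      exact ((hlt _).trans_le (norm_fst2_le _)).le.trans (hw1 _).le
  have hsnd : snd2 w₀ = 0 := tendsto_nhds_unique ((continuous_snd2.tendsto w₀).comp hw₀)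
    (squeeze_zero_norm' hsnd_le (tendsto_inv_atTop_zero.comp hp2))
  have hnorm : ‖w₀‖ = 1 := tendsto_nhds_unique hw₀.norm (by simp [hw1])
  exact one_ne_zero <| hnorm ▸ norm_eq_zero.mpr
    (eq_zero_of_mem_Znreg (hZ _ ⟨M, hM, rfl⟩) hw₀M hsnd)

lemma eventually_forall_mem_scdregSet_le (hZ : ∀ L ∈ SpStar F zb, L ∈ Znreg n) {κ : ℝ}
    (hκ : scdreg F zb < κ) : ∀ᶠ z in 𝓝 zb, ∀ r ∈ scdregSet F z, r ≤ κ := by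
  obtain ⟨C, hC0, hC⟩ := exists_eventually_norm_fst2_le_mul_norm_snd2 hZ
  have hbdd : BddAbove (scdregSet F zb) := ⟨C, forall_mem_scdregSet_le hC0 hC.self_of_nhds⟩
  by_contra h
  obtain ⟨z, hz, hbad⟩ := frequently_iff_seq_forall.mp ((not_eventually.mp h).and_eventually hC)
  have hw : ∀ j, ∃ L ∈ Sp F (z j), ∃ w ∈ adjS L,
      ‖snd2 w‖ ≤ 1 ∧ κ < ‖fst2 w‖ ∧ ‖fst2 w‖ ≤ C := by
    intro j
    obtain ⟨hr, hCj⟩ := hbad j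
    push Not at hr
    obtain ⟨r, hr, hκr⟩ := hr
    have hrC := forall_mem_scdregSet_le hC0 hCj r hr
    obtain ⟨_, ⟨L, hL, rfl⟩, w, hw, hsnd, rfl⟩ := hr
    exact ⟨L, hL, w, hw, hsnd, hκr, hrC⟩
  choose L hL w hw hsnd hκw hwC using hw
  obtain ⟨w₀, -, φ, hφ, hw₀⟩ := tendsto_subseq_of_bounded (isBounded_closedBall (x := 0)
    (r := C + 1)) (x := w) fun j => mem_closedBall_zero_iff.mpr
      ((norm_le_norm_fst2_add_norm_snd2 _).trans (add_le_add (hwC j) (hsnd j)))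
  obtain ⟨M, hM, hw₀M⟩ := exists_mem_Sp_mem_adjS_of_tendsto (hz.comp hφ.tendsto_atTop)
    (fun j => hL (φ j)) (fun j => hw (φ j)) hw₀
  have hmem : ‖fst2 w₀‖ ∈ scdregSet F zb := ⟨_, ⟨M, hM, rfl⟩, w₀, hw₀M,
    le_of_tendsto' ((continuous_snd2.tendsto _).comp hw₀).norm fun j => hsnd _, rfl⟩
  have hκle : κ ≤ ‖fst2 w₀‖ :=
    ge_of_tendsto' ((continuous_fst2.tendsto _).comp hw₀).norm fun j => (hκw _).le
  exact (hκle.trans (le_csSup hbdd hmem)).not_gt hκ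

end Regularity

theorem stmt13_general (n : ℕ) (F : E n → Set (E n)) (zb : E2 n)
    (hreg : SCDRegularAround F zb) :
    (∃ δ > (0 : ℝ), ∀ z ∈ gph F, dist z zb < δ → SCDRegularAround F z) ∧
    ∀ κ : ℝ, scdreg F zb < κ → ∃ δ > (0 : ℝ), ∀ z ∈ gph F, dist z zb < δ →
      ∀ r ∈ scdregSet F z, r ≤ κ := by
  obtain ⟨hscd, hZ⟩ := hreg
  obtain ⟨C, -, hC⟩ := exists_eventually_norm_fst2_le_mul_norm_snd2 hZ
  refine ⟨?_, fun κ hκ => ?_⟩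
  · obtain ⟨δ, hδ, h⟩ := Metric.eventually_nhds_iff.mp (hscd.eventually_scdAround.and hC)
    refine ⟨δ, hδ, fun z _ hz => ⟨(h hz).1, ?_⟩⟩
    rintro _ ⟨L, hL, rfl⟩
    exact mem_Znreg_adjS hL.1 ((h hz).2 L hL)
  · obtain ⟨δ, hδ, h⟩ := Metric.eventually_nhds_iff.mp (eventually_forall_mem_scdregSet_le hZ hκ)
    exact ⟨δ, hδ, fun z _ hz => h hz⟩

theorem stmt13 (n : ℕ) (F : E n → Set (E n)) (zb : E2 n) (hzb : zb ∈ gph F)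
    (hreg : SCDRegularAround F zb) :
    (∃ δ > (0 : ℝ), ∀ z ∈ gph F, dist z zb < δ → SCDRegularAround F z) ∧
    ∀ κ : ℝ, scdreg F zb < κ → ∃ δ > (0 : ℝ), ∀ z ∈ gph F, dist z zb < δ →
      ∀ r ∈ scdregSet F z, r ≤ κ :=
  stmt13_general n F zb hreg

end SCD
end
end

section
/- Assume that F : ℝ^n ⇒ ℝ^n is SCD semismooth* at (x̄, ȳ) ∈ gph F. Then for every ε > 0 there is δ > 0 such that the inequality ‖x − C_Lᵀ(y − ȳ) − x̄‖ ≤ ε·√(n(1 + ‖C_L‖²))·‖(x, y) − (x̄, ȳ)‖ holds for every (x, y) ∈ gph F with ‖(x, y) − (x̄, ȳ)‖ ≤ δ and every L ∈ Sp* F(x, y) ∩ Z_n^{reg}. -/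
open Filter Topology Metric Set
open scoped InnerProductSpace RealInnerProductSpace ENNReal NNReal

noncomputable section

namespace SCD

variable {n : ℕ}

theorem fst2_graphMapRev (C : E n →L[ℝ] E n) (p : E n) : fst2 (graphMapRev C p) = C p := rfl

theorem snd2_graphMapRev (C : E n →L[ℝ] E n) (p : E n) : snd2 (graphMapRev C p) = p := rfl

theorem graphMapRev_mem_rgeCI (C : E n →L[ℝ] E n) (p : E n) : graphMapRev C p ∈ rgeCI C :=
  ⟨p, rfl⟩

theorem norm_graphMapRev_sq (C : E n →L[ℝ] E n) (p : E n) :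
    ‖graphMapRev C p‖ ^ 2 = ‖C p‖ ^ 2 + ‖p‖ ^ 2 :=
  WithLp.prod_norm_sq_eq_of_L2 _

theorem norm_graphMapRev_le (C : E n →L[ℝ] E n) (p : E n) :
    ‖graphMapRev C p‖ ≤ √(1 + ‖C‖ ^ 2) * ‖p‖ := by
  have hCp : ‖C p‖ ^ 2 ≤ (‖C‖ * ‖p‖) ^ 2 := by gcongr; exact C.le_opNorm p
  rw [← Real.sqrt_sq (norm_nonneg _), ← Real.sqrt_sq (norm_nonneg p), ← Real.sqrt_mul (by positivity)]
  gcongr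
  rw [norm_graphMapRev_sq]
  linarith

theorem one_le_dim_of_ne_zero {p : E n} (hp : p ≠ 0) : (1 : ℝ) ≤ n := by
  have hn : n ≠ 0 := by
    rintro rfl
    exact hp (Subsingleton.elim _ _)
  exact_mod_cast Nat.one_le_iff_ne_zero.mpr hn

theorem inner_sub_inner_apply (C : E n →L[ℝ] E n) (p u v : E n) :
    ⟪p, u⟫_ℝ - ⟪C p, v⟫_ℝ = ⟪p, u - ContinuousLinearMap.adjoint C v⟫_ℝ := by
  rw [inner_sub_right, ContinuousLinearMap.adjoint_inner_right]

/-- Testing the semismooth* inequality against `(C p, p) ∈ rge(C, I)` with `p` the residual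
`u - Cᵀ v` turns its left-hand side into `‖p‖²`. -/
theorem norm_sub_adjoint_le {C : E n →L[ℝ] E n} {u v : E n} {r : ℝ} (hr : 0 ≤ r)
    (h : ∀ p, |⟪p, u⟫_ℝ - ⟪C p, v⟫_ℝ| ≤ r * ‖graphMapRev C p‖) :
    ‖u - ContinuousLinearMap.adjoint C v‖ ≤ r * √(n * (1 + ‖C‖ ^ 2)) := by
  set p := u - ContinuousLinearMap.adjoint C v
  rcases eq_or_ne p 0 with hp | hp
  · rw [hp, norm_zero]; positivity
  have hsqrt : √(1 + ‖C‖ ^ 2) ≤ √(n * (1 + ‖C‖ ^ 2)) := by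
    gcongr
    exact le_mul_of_one_le_left (by positivity) (one_le_dim_of_ne_zero hp)
  have hsq : ‖p‖ * ‖p‖ ≤ r * √(n * (1 + ‖C‖ ^ 2)) * ‖p‖ :=
    calc ‖p‖ * ‖p‖ = |⟪p, u⟫_ℝ - ⟪C p, v⟫_ℝ| := by
          rw [inner_sub_inner_apply, real_inner_self_eq_norm_mul_norm, abs_of_nonneg (by positivity)]
      _ ≤ r * ‖graphMapRev C p‖ := h p
      _ ≤ r * (√(1 + ‖C‖ ^ 2) * ‖p‖) := by gcongr; exact norm_graphMapRev_le C p
      _ ≤ r * √(n * (1 + ‖C‖ ^ 2)) * ‖p‖ := by rw [← mul_assoc]; gcongr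
  exact le_of_mul_le_mul_right hsq (norm_pos_iff.mpr hp)

theorem stmt14_general (n : ℕ) (F : E n → Set (E n)) (zb : E2 n)
    (hss : SCDSemismoothAt F zb) :
    ∀ ε > (0 : ℝ), ∃ δ > (0 : ℝ), ∀ z ∈ gph F, dist z zb ≤ δ →
      ∀ L ∈ SpStar F z, L ∈ Znreg n → ∀ C : E n →L[ℝ] E n, L = rgeCI C →
        ‖fst2 z - ContinuousLinearMap.adjoint C (snd2 z - snd2 zb) - fst2 zb‖ ≤
          ε * Real.sqrt (n * (1 + ‖C‖ ^ 2)) * ‖z - zb‖ := by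
  intro ε hε
  obtain ⟨δ, hδ, hsemi⟩ := hss.2 ε hε
  refine ⟨δ, hδ, fun z hz hdist L hL _ C hLC => ?_⟩
  subst hLC
  have hres := norm_sub_adjoint_le (u := fst2 z - fst2 zb) (v := snd2 z - snd2 zb)
    (by positivity : 0 ≤ ε * ‖z - zb‖) fun p => by
      simpa only [fst2_graphMapRev, snd2_graphMapRev] using
        hsemi z hz hdist _ hL _ (graphMapRev_mem_rgeCI C p)
  rwa [sub_right_comm, mul_right_comm]

theorem stmt14 (n : ℕ) (F : E n → Set (E n)) (zb : E2 n) (hzb : zb ∈ gph F)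
    (hss : SCDSemismoothAt F zb) :
    ∀ ε > (0 : ℝ), ∃ δ > (0 : ℝ), ∀ z ∈ gph F, dist z zb ≤ δ →
      ∀ L ∈ SpStar F z, L ∈ Znreg n → ∀ C : E n →L[ℝ] E n, L = rgeCI C →
        ‖fst2 z - ContinuousLinearMap.adjoint C (snd2 z - snd2 zb) - fst2 zb‖ ≤
          ε * Real.sqrt (n * (1 + ‖C‖ ^ 2)) * ‖z - zb‖ :=
  stmt14_general n F zb hss

end SCD
end
end
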